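/- (Key-rate converse inequality.) For any n, any (R₀,R,n) coordination scheme, and any adversary strategy, with (X^n,K,J,Y^n,Z^n) distributed according to the induced joint pmf, the entropy of the key satisfies H(K) ≥ Σ_{i=1}^n I(X_i, Y_i ; K | J, X^{i-1}, Y^{i-1}, Z^{i-1}). In particular, since K is uniform on a set of cardinality at most 2^{nR₀}, we have nR₀ ≥ Σ_{i=1}^n I(X_i, Y_i ; K | J, X^{i-1}, Y^{i-1}, Z^{i-1}). -/

import Mathlib

open scoped BigOperators Classical

noncomputable section

/-! ### Finite probability basics -/

/-- A probability mass function on a finite type, given as a real-valued function. -/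
def IsPMF {α : Type} [Fintype α] (p : α → ℝ) : Prop :=
  (∀ a, 0 ≤ p a) ∧ ∑ a, p a = 1

/-- The probability that the random variable `A` takes the value `a` under the pmf `p`. -/
def probOf {Ω : Type} {α : Type} [Fintype Ω] (p : Ω → ℝ) (A : Ω → α) (a : α) : ℝ :=
  ∑ ω, if A ω = a then p ω else 0

/-- Shannon entropy (in bits) of the random variable `A` under the pmf `p`. -/
def entropy {Ω α : Type} [Fintype Ω] [Fintype α] (p : Ω → ℝ) (A : Ω → α) : ℝ :=
  -∑ a, probOf p A a * Real.logb 2 (probOf p A a)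

/-- Conditional Shannon entropy `H(A | C)` (in bits). -/
def condEntropy {Ω α γ : Type} [Fintype Ω] [Fintype α] [Fintype γ]
    (p : Ω → ℝ) (A : Ω → α) (C : Ω → γ) : ℝ :=
  entropy p (fun ω => (A ω, C ω)) - entropy p C

/-- Shannon mutual information `I(A;B)` (in bits). -/
def mutualInfo {Ω α β : Type} [Fintype Ω] [Fintype α] [Fintype β]
    (p : Ω → ℝ) (A : Ω → α) (B : Ω → β) : ℝ :=
  entropy p A + entropy p B - entropy p (fun ω => (A ω, B ω))

/-- Conditional Shannon mutual information `I(A;B|C)` (in bits). -/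
def condMutualInfo {Ω α β γ : Type} [Fintype Ω] [Fintype α] [Fintype β] [Fintype γ]
    (p : Ω → ℝ) (A : Ω → α) (B : Ω → β) (C : Ω → γ) : ℝ :=
  entropy p (fun ω => (A ω, C ω)) + entropy p (fun ω => (B ω, C ω))
    - entropy p (fun ω => (A ω, B ω, C ω)) - entropy p C

/-- Conditional independence `A ⟂ B | C` under the pmf `p`:
`P(A=a, B=b, C=c) · P(C=c) = P(A=a, C=c) · P(B=b, C=c)` for all `a, b, c`. -/
def CondIndep {Ω α β γ : Type} [Fintype Ω] (p : Ω → ℝ)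
    (A : Ω → α) (B : Ω → β) (C : Ω → γ) : Prop :=
  ∀ a b c,
    probOf p (fun ω => (A ω, B ω, C ω)) (a, b, c) * probOf p C c
      = probOf p (fun ω => (A ω, C ω)) (a, c) * probOf p (fun ω => (B ω, C ω)) (b, c)

/-! ### Coordination schemes and adversaries -/

/-- Cardinality of the secret-key alphabet: `max 1 ⌊2^{n R₀}⌋`. -/
def keyCard (R0 : ℝ) (n : ℕ) : ℕ := max 1 ⌊(2 : ℝ) ^ ((n : ℝ) * R0)⌋₊

/-- Cardinality of the message alphabet: `max 1 ⌊2^{n R}⌋`. -/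
def msgCard (R : ℝ) (n : ℕ) : ℕ := max 1 ⌊(2 : ℝ) ^ ((n : ℝ) * R)⌋₊

/-- An `(R₀, R, n)` coordination scheme: a randomized encoder `p(j | xⁿ, k)` and a
randomized causal decoder `{p(yᵢ | j, k, x^{i-1}, y^{i-1}, z^{i-1})}`. -/
structure Scheme (X Y Z : Type) [Fintype X] [Fintype Y] [Fintype Z]
    (R0 R : ℝ) (n : ℕ) where
  enc : (Fin n → X) → Fin (keyCard R0 n) → Fin (msgCard R n) → ℝ
  enc_pmf : ∀ x k, IsPMF (enc x k)
  dec : Fin n → Fin (msgCard R n) → Fin (keyCard R0 n) →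
      (Fin n → X) → (Fin n → Y) → (Fin n → Z) → Y → ℝ
  dec_pmf : ∀ i j k x y z, IsPMF (dec i j k x y z)
  dec_causal : ∀ i j k x y z x' y' z',
      (∀ m, m < i → x m = x' m) → (∀ m, m < i → y m = y' m) →
      (∀ m, m < i → z m = z' m) →
      dec i j k x y z = dec i j k x' y' z'

/-- An adversary strategy with full causal information:
`{p(zᵢ | j, x^{i-1}, y^{i-1}, z^{i-1})}`. -/
structure Adversary (X Y Z : Type) [Fintype X] [Fintype Y] [Fintype Z]
    (R : ℝ) (n : ℕ) where
  adv : Fin n → Fin (msgCard R n) →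
      (Fin n → X) → (Fin n → Y) → (Fin n → Z) → Z → ℝ
  adv_pmf : ∀ i j x y z, IsPMF (adv i j x y z)
  adv_causal : ∀ i j x y z x' y' z',
      (∀ m, m < i → x m = x' m) → (∀ m, m < i → y m = y' m) →
      (∀ m, m < i → z m = z' m) →
      adv i j x y z = adv i j x' y' z'

/-- Sample space of a block of length `n`: `(Xⁿ, K, J, Yⁿ, Zⁿ)`. -/
abbrev Outc (X Y Z : Type) (R0 R : ℝ) (n : ℕ) : Type :=
  (Fin n → X) × Fin (keyCard R0 n) × Fin (msgCard R n) × (Fin n → Y) × (Fin n → Z)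

/-- The induced joint pmf of `(Xⁿ, K, J, Yⁿ, Zⁿ)`:
`p₀ⁿ(xⁿ)·|𝒦|⁻¹·p(j|xⁿ,k)·∏ᵢ p(yᵢ|j,k,x^{i-1},y^{i-1},z^{i-1})·p(zᵢ|j,x^{i-1},y^{i-1},z^{i-1})`. -/
def jointPMF {X Y Z : Type} [Fintype X] [Fintype Y] [Fintype Z] {R0 R : ℝ} {n : ℕ}
    (p0 : X → ℝ) (S : Scheme X Y Z R0 R n) (A : Adversary X Y Z R n) :
    Outc X Y Z R0 R n → ℝ :=
  fun ω => (∏ i, p0 (ω.1 i)) * ((keyCard R0 n : ℝ))⁻¹ *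
    S.enc ω.1 ω.2.1 ω.2.2.1 *
    ∏ i, S.dec i ω.2.2.1 ω.2.1 ω.1 ω.2.2.2.1 ω.2.2.2.2 (ω.2.2.2.1 i) *
      A.adv i ω.2.2.1 ω.1 ω.2.2.2.1 ω.2.2.2.2 (ω.2.2.2.2 i)

/-- The expected average payoff `E[(1/n) Σᵢ π(Xᵢ, Yᵢ, Zᵢ)]`. -/
def avgValue {X Y Z : Type} [Fintype X] [Fintype Y] [Fintype Z] {R0 R : ℝ} {n : ℕ}
    (p0 : X → ℝ) (π : X → Y → Z → ℝ)
    (S : Scheme X Y Z R0 R n) (A : Adversary X Y Z R n) : ℝ :=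
  ∑ ω : Outc X Y Z R0 R n, jointPMF p0 S A ω *
    ((n : ℝ)⁻¹ * ∑ i, π (ω.1 i) (ω.2.2.2.1 i) (ω.2.2.2.2 i))

/-- The robust achievable value `Π_{p₀}(R₀, R)`: the supremum over blocklengths and schemes
of the least average payoff over all (fully informed) adversary strategies. -/
def robustValue {X Y Z : Type} [Fintype X] [Fintype Y] [Fintype Z]
    (p0 : X → ℝ) (π : X → Y → Z → ℝ) (R0 R : ℝ) : ℝ :=
  ⨆ (n : ℕ) (_ : 0 < n) (S : Scheme X Y Z R0 R n),
    ⨅ A : Adversary X Y Z R n, avgValue p0 π S A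

/-! ### Single-letter quantities -/

/-- The single-letter joint pmf of `(X, Y, U, V)` built from the source `p₀` and a
conditional pmf `p(y,u,v|x)`. -/
def slJoint {X Y U V : Type} (p0 : X → ℝ) (w : X → Y × U × V → ℝ) :
    X × Y × U × V → ℝ :=
  fun q => p0 q.1 * w q.1 q.2

/-- Membership in the single-letter region `𝒫_{p₀}(R₀,R)`: `p(y,u,v|x)` is a conditional pmf,
`X — (U,V) — Y` is a Markov chain, `R₀ ≥ I(X,Y;V|U)` and `R ≥ I(X;U,V)`. -/
def memP {X Y U V : Type} [Fintype X] [Fintype Y] [Fintype U] [Fintype V]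
    (p0 : X → ℝ) (w : X → Y × U × V → ℝ) (R0 R : ℝ) : Prop :=
  (∀ x, IsPMF (w x)) ∧
  CondIndep (slJoint p0 w) (fun q => q.1) (fun q => q.2.1) (fun q => q.2.2) ∧
  R0 ≥ condMutualInfo (slJoint p0 w)
      (fun q => (q.1, q.2.1)) (fun q => q.2.2.2) (fun q => q.2.2.1) ∧
  R ≥ mutualInfo (slJoint p0 w) (fun q => q.1) (fun q => q.2.2)

/-- The expected payoff `E[π(X, Y, z(U))]` when the adversary plays a function `z : U → Z`. -/
def slPayoff {X Y Z U V : Type} [Fintype X] [Fintype Y] [Fintype U] [Fintype V]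
    (p0 : X → ℝ) (w : X → Y × U × V → ℝ) (π : X → Y → Z → ℝ) (z : U → Z) : ℝ :=
  ∑ q : X × Y × U × V, slJoint p0 w q * π q.1 q.2.1 (z q.2.2.1)

/-- The single-letter value `Γ_{p₀,π}(R₀,R)`: the supremum over finite auxiliary alphabets
`𝒰, 𝒱` and conditional pmfs `p(y,u,v|x) ∈ 𝒫_{p₀}(R₀,R)` of `min_{z : 𝒰 → 𝒵} E[π(X,Y,z(U))]`. -/
def Gamma {X Y Z : Type} [Fintype X] [Fintype Y] [Fintype Z]
    (p0 : X → ℝ) (π : X → Y → Z → ℝ) (R0 R : ℝ) : ℝ :=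
  sSup {v : ℝ | ∃ (U V : Type) (_ : Fintype U) (_ : Fintype V)
    (w : X → Y × U × V → ℝ), memP p0 w R0 R ∧
    v = ⨅ z : U → Z, slPayoff p0 w π z}


/-- The strict past `x^{i-1} = (x_1, …, x_{i-1})` of a sequence. -/
def pastOf {α : Type} {n : ℕ} (x : Fin n → α) (i : Fin n) : Fin i.1 → α :=
  fun m => x (m.castLE i.2.le)

/-! The `i`-th summand is at most `I(Vᵢ; K | J, V^{i-1})` with `Vᵢ = (Xᵢ, Yᵢ, Zᵢ)`, and by the chain
rule these terms telescope to `I(Vⁿ; K | J) ≤ H(K | J) ≤ H(K)`. The causal decoder and adversary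
kernels integrate out to one, so under the joint pmf the key keeps its uniform law and
`H(K) = log |𝒦| ≤ n R₀`. -/

open Finset Real

lemma sub_le_mul_log_sub_log {x y : ℝ} (hx : 0 ≤ x) (hy : 0 ≤ y) (hxy : 0 < x → 0 < y) :
    x - y ≤ x * (log x - log y) := by
  rcases hx.eq_or_lt with rfl | hx
  · simpa using hy
  have hy := hxy hx
  have := mul_le_mul_of_nonneg_left (log_le_sub_one_of_pos (div_pos hy hx)) hx.le
  rw [log_div hy.ne' hx.ne', mul_sub_one, mul_div_cancel₀ _ hx.ne'] at this
  linarith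

section Entropy

variable {Ω α β γ : Type} [Fintype Ω] (p : Ω → ℝ)

lemma probOf_nonneg (hp : ∀ ω, 0 ≤ p ω) (A : Ω → α) (a : α) : 0 ≤ probOf p A a :=
  sum_nonneg fun ω _ => by split_ifs <;> simp [hp ω]

lemma probOf_mono (hp : ∀ ω, 0 ≤ p ω) {A : Ω → α} {B : Ω → β} {a : α} {b : β}
    (h : ∀ ω, A ω = a → B ω = b) : probOf p A a ≤ probOf p B b :=
  sum_le_sum fun ω _ => by
    by_cases ha : A ω = a
    · simp [ha, h ω ha]
    · rw [if_neg ha]; split_ifs <;> simp [hp ω]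

lemma le_probOf_self (hp : ∀ ω, 0 ≤ p ω) (A : Ω → α) (ω : Ω) : p ω ≤ probOf p A (A ω) := by
  simpa [probOf] using single_le_sum (f := fun ω' => if A ω' = A ω then p ω' else 0)
    (fun ω' _ => by split_ifs <;> simp [hp ω']) (mem_univ ω)

lemma sum_mul_comp_eq_sum_probOf [Fintype α] (T : Ω → α) (h : α → ℝ) :
    ∑ ω, p ω * h (T ω) = ∑ t, probOf p T t * h t := by
  simp only [probOf, sum_mul, ite_mul, zero_mul]
  rw [sum_comm]
  simp

lemma sum_probOf [Fintype α] (A : Ω → α) : ∑ a, probOf p A a = ∑ ω, p ω := by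
  simpa using (sum_mul_comp_eq_sum_probOf p A fun _ => 1).symm

lemma sum_probOf_pair [Fintype α] (A : Ω → α) (C : Ω → γ) (c : γ) :
    ∑ a, probOf p (fun ω => (A ω, C ω)) (a, c) = probOf p C c := by
  simp only [probOf, Prod.mk.injEq]
  rw [sum_comm]
  refine sum_congr rfl fun ω _ => ?_
  by_cases hc : C ω = c <;> simp [hc]

lemma entropy_eq_neg_sum [Fintype α] (A : Ω → α) :
    entropy p A = -∑ ω, p ω * logb 2 (probOf p A (A ω)) := by
  rw [entropy, sum_mul_comp_eq_sum_probOf p A fun a => logb 2 (probOf p A a)]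

lemma entropy_comp_eq_neg_sum [Fintype α] [Fintype β] (T : Ω → α) (f : α → β) :
    entropy p (fun ω => f (T ω)) =
      -∑ t, probOf p T t * logb 2 (probOf p (fun ω => f (T ω)) (f t)) := by
  rw [entropy_eq_neg_sum,
    sum_mul_comp_eq_sum_probOf p T fun t => logb 2 (probOf p (fun ω => f (T ω)) (f t))]

lemma entropy_congr [Fintype α] [Fintype β] {A : Ω → α} {B : Ω → β}
    (h : ∀ ω ω', A ω' = A ω ↔ B ω' = B ω) : entropy p A = entropy p B := by
  have hprob : ∀ ω, probOf p A (A ω) = probOf p B (B ω) := fun ω =>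
    sum_congr rfl fun ω' _ => if_congr (h ω ω') rfl rfl
  simp only [entropy_eq_neg_sum, hprob]

lemma entropy_le_of_determined [Fintype α] [Fintype β] (hp : ∀ ω, 0 ≤ p ω)
    {A : Ω → α} {B : Ω → β} (h : ∀ ω ω', A ω' = A ω → B ω' = B ω) : entropy p B ≤ entropy p A := by
  rw [entropy_eq_neg_sum, entropy_eq_neg_sum, neg_le_neg_iff]
  refine sum_le_sum fun ω _ => ?_
  rcases (hp ω).eq_or_lt with h0 | h0
  · simp [← h0]
  refine mul_le_mul_of_nonneg_left (logb_le_logb_of_le one_lt_two ?_ ?_) (hp ω)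
  · exact h0.trans_le (le_probOf_self p hp A ω)
  · exact probOf_mono p hp (h ω)

lemma entropy_of_isEmpty [IsEmpty Ω] [Fintype α] (A : Ω → α) : entropy p A = 0 := by
  simp [entropy, probOf]

lemma entropy_of_probOf_eq_inv_card [Fintype α] {A : Ω → α}
    (h : ∀ a, probOf p A a = (Fintype.card α : ℝ)⁻¹) :
    entropy p A = logb 2 (Fintype.card α) := by
  simp only [entropy, h, sum_const, card_univ, nsmul_eq_mul, logb_inv, mul_neg, neg_neg,
    ← mul_assoc]
  rcases eq_or_ne (Fintype.card α : ℝ) 0 with h0 | h0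
  · simp [h0]
  · rw [mul_inv_cancel₀ h0, one_mul]

end Entropy

section Information

variable {Ω α β γ δ : Type} [Fintype Ω] [Fintype α] [Fintype β] [Fintype γ] [Fintype δ]
  (p : Ω → ℝ)

lemma condMutualInfo_eq_sum (A : Ω → α) (B : Ω → β) (C : Ω → γ) :
    condMutualInfo p A B C = ∑ t : α × β × γ, probOf p (fun ω => (A ω, B ω, C ω)) t *
      (logb 2 (probOf p (fun ω => (A ω, B ω, C ω)) t) + logb 2 (probOf p C t.2.2)
        - logb 2 (probOf p (fun ω => (A ω, C ω)) (t.1, t.2.2))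
        - logb 2 (probOf p (fun ω => (B ω, C ω)) (t.2.1, t.2.2))) := by
  set T := fun ω => (A ω, B ω, C ω)
  have hAC := entropy_comp_eq_neg_sum p T fun t => (t.1, t.2.2)
  have hBC := entropy_comp_eq_neg_sum p T fun t => (t.2.1, t.2.2)
  have hC := entropy_comp_eq_neg_sum p T fun t => t.2.2
  have hT := entropy_comp_eq_neg_sum p T id
  simp only [id] at hAC hBC hC hT
  simp only [condMutualInfo, mul_add, mul_sub, sum_add_distrib, sum_sub_distrib]
  rw [hAC, hBC, hC, hT]
  ring

theorem condMutualInfo_nonneg (hp : ∀ ω, 0 ≤ p ω) (A : Ω → α) (B : Ω → β) (C : Ω → γ) :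
    0 ≤ condMutualInfo p A B C := by
  set q := probOf p (fun ω => (A ω, B ω, C ω))
  set u := fun a c => probOf p (fun ω => (A ω, C ω)) (a, c)
  set v := fun b c => probOf p (fun ω => (B ω, C ω)) (b, c)
  set w := probOf p C
  -- Gibbs' inequality against the conditionally independent coupling `g` of the marginals of `q`
  set g : α × β × γ → ℝ := fun t => u t.1 t.2.2 * v t.2.1 t.2.2 / w t.2.2
  have hq : ∀ t, 0 ≤ q t := probOf_nonneg p hp _
  have hpos : ∀ t, 0 < q t → 0 < u t.1 t.2.2 ∧ 0 < v t.2.1 t.2.2 ∧ 0 < w t.2.2 := by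
    rintro ⟨a, b, c⟩ ht
    refine ⟨ht.trans_le ?_, ht.trans_le ?_, ht.trans_le ?_⟩ <;>
      exact probOf_mono p hp fun ω h => by simp_all
  have hterm : ∀ t, q t * (logb 2 (q t) + logb 2 (w t.2.2) - logb 2 (u t.1 t.2.2)
      - logb 2 (v t.2.1 t.2.2)) = q t * (log (q t) - log (g t)) / log 2 := by
    intro t
    rcases (hq t).eq_or_lt with h0 | h0
    · simp [← h0]
    obtain ⟨hu, hv, hw⟩ := hpos t h0
    simp only [g, logb, log_div (mul_pos hu hv).ne' hw.ne', log_mul hu.ne' hv.ne']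
    ring
  have hsum : ∑ t, g t = ∑ t, q t := by
    rw [sum_probOf, ← sum_probOf p C]
    simp only [g, Fintype.sum_prod_type]
    rw [sum_congr rfl fun a _ => sum_comm, sum_comm]
    refine sum_congr rfl fun c _ => ?_
    simp only [u, v, ← sum_div, ← sum_mul_sum, sum_probOf_pair, w, mul_self_div_self]
  rw [condMutualInfo_eq_sum]
  calc (0 : ℝ) = ∑ t, (q t - g t) / log 2 := by
        rw [← sum_div, sum_sub_distrib, hsum, sub_self, zero_div]
    _ ≤ _ := sum_le_sum fun t _ => by
      rw [hterm]
      refine div_le_div_of_nonneg_right (sub_le_mul_log_sub_log (hq t) ?_ ?_)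
        (log_pos one_lt_two).le
      · exact div_nonneg (mul_nonneg (probOf_nonneg p hp _ _) (probOf_nonneg p hp _ _))
          (probOf_nonneg p hp _ _)
      · intro h0
        obtain ⟨hu, hv, hw⟩ := hpos t h0
        positivity

theorem entropy_pair_le_add (hp : ∀ ω, 0 ≤ p ω) (hmass : ∑ ω, p ω = 1)
    (A : Ω → α) (B : Ω → β) :
    entropy p (fun ω => (A ω, B ω)) ≤ entropy p A + entropy p B := by
  have h := condMutualInfo_nonneg p hp A B fun _ => ()
  have hconst : entropy p (fun _ => ()) = 0 := by simp [entropy, probOf, hmass]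
  rw [condMutualInfo, hconst, entropy_congr p (A := fun ω => (A ω, ())) (B := A) (by simp),
    entropy_congr p (A := fun ω => (B ω, ())) (B := B) (by simp),
    entropy_congr p (A := fun ω => (A ω, B ω, ())) (B := fun ω => (A ω, B ω)) (by simp)] at h
  linarith

theorem condMutualInfo_pair_left (A : Ω → α) (D : Ω → δ) (B : Ω → β) (C : Ω → γ) :
    condMutualInfo p (fun ω => (A ω, D ω)) B C =
      condMutualInfo p A B C + condMutualInfo p D B (fun ω => (A ω, C ω)) := by
  have h₁ : entropy p (fun ω => ((A ω, D ω), C ω)) = entropy p (fun ω => (D ω, A ω, C ω)) :=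
    entropy_congr p fun ω ω' => by simp only [Prod.mk.injEq]; tauto
  have h₂ : entropy p (fun ω => ((A ω, D ω), B ω, C ω)) =
      entropy p (fun ω => (D ω, B ω, A ω, C ω)) :=
    entropy_congr p fun ω ω' => by simp only [Prod.mk.injEq]; tauto
  have h₃ : entropy p (fun ω => (A ω, B ω, C ω)) = entropy p (fun ω => (B ω, A ω, C ω)) :=
    entropy_congr p fun ω ω' => by simp only [Prod.mk.injEq]; tauto
  simp only [condMutualInfo, h₁, h₂, h₃]
  ring

theorem condMutualInfo_le_pair_left (hp : ∀ ω, 0 ≤ p ω) (A : Ω → α) (D : Ω → δ) (B : Ω → β)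
    (C : Ω → γ) : condMutualInfo p A B C ≤ condMutualInfo p (fun ω => (A ω, D ω)) B C := by
  rw [condMutualInfo_pair_left]
  linarith [condMutualInfo_nonneg p hp D B fun ω => (A ω, C ω)]

theorem condMutualInfo_congr_cond (A : Ω → α) (B : Ω → β) {C : Ω → γ} {C' : Ω → δ}
    (hC : ∀ ω ω', C ω' = C ω ↔ C' ω' = C' ω) :
    condMutualInfo p A B C = condMutualInfo p A B C' := by
  have hpair : ∀ {ε : Type} [Fintype ε] (E : Ω → ε),
      entropy p (fun ω => (E ω, C ω)) = entropy p (fun ω => (E ω, C' ω)) := fun E =>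
    entropy_congr p fun ω ω' => by simp only [Prod.mk.injEq, hC]
  have htriple : entropy p (fun ω => (A ω, B ω, C ω)) = entropy p (fun ω => (A ω, B ω, C' ω)) :=
    entropy_congr p fun ω ω' => by simp only [Prod.mk.injEq, hC]
  simp only [condMutualInfo, hpair A, hpair B, htriple, entropy_congr p hC]

end Information

lemma forall_lt_succ_eq_iff {γ : Type} {n : ℕ} (f g : Fin n → γ) (i : Fin n) :
    (∀ m : Fin n, (m : ℕ) < i + 1 → f m = g m) ↔
      (∀ m : Fin n, (m : ℕ) < i → f m = g m) ∧ f i = g i := by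
  refine ⟨fun h => ⟨fun m hm => h m (by omega), h i (by omega)⟩, ?_⟩
  rintro ⟨h, hi⟩ m hm
  rcases Nat.lt_succ_iff_lt_or_eq.1 hm with hm | hm
  · exact h m hm
  · rwa [Fin.ext hm]

theorem sum_condMutualInfo_past_le_entropy {Ω ι κ γ : Type} [Fintype Ω] [Fintype ι] [Fintype κ]
    [Fintype γ] (p : Ω → ℝ) (hp : ∀ ω, 0 ≤ p ω) (hmass : ∑ ω, p ω = 1) {n : ℕ}
    (V : Fin n → Ω → γ) (K : Ω → κ) (J : Ω → ι) :
    ∑ i : Fin n, condMutualInfo p (V i) K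
        (fun ω => (J ω, fun m : {m : Fin n // (m : ℕ) < i} => V m ω)) ≤ entropy p K := by
  -- pasts are indexed by `t : ℕ`, not `Fin n`, so that the telescoping sum can reach `t = n`
  obtain ⟨G₁, hG₁⟩ : ∃ G : ℕ → ℝ, ∀ t, G t =
      entropy p (fun ω => (J ω, fun m : {m : Fin n // (m : ℕ) < t} => V m ω)) := ⟨_, fun _ => rfl⟩
  obtain ⟨G₂, hG₂⟩ : ∃ G : ℕ → ℝ, ∀ t, G t =
      entropy p (fun ω => (K ω, J ω, fun m : {m : Fin n // (m : ℕ) < t} => V m ω)) :=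
    ⟨_, fun _ => rfl⟩
  have step : ∀ i : Fin n, condMutualInfo p (V i) K
      (fun ω => (J ω, fun m : {m : Fin n // (m : ℕ) < i} => V m ω)) =
        (G₁ (i + 1) - G₁ i) - (G₂ (i + 1) - G₂ i) := by
    intro i
    have h₁ : entropy p (fun ω => (V i ω, J ω, fun m : {m : Fin n // (m : ℕ) < i} => V m ω)) =
        G₁ (i + 1) := by
      rw [hG₁]
      exact entropy_congr p fun ω ω' => by
        simp only [Prod.mk.injEq, funext_iff, Subtype.forall, forall_lt_succ_eq_iff]; tauto
    have h₂ : entropy p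
        (fun ω => (V i ω, K ω, J ω, fun m : {m : Fin n // (m : ℕ) < i} => V m ω)) =
        G₂ (i + 1) := by
      rw [hG₂]
      exact entropy_congr p fun ω ω' => by
        simp only [Prod.mk.injEq, funext_iff, Subtype.forall, forall_lt_succ_eq_iff]; tauto
    rw [condMutualInfo, h₁, h₂, hG₁ i, hG₂ i]
    ring
  rw [sum_congr rfl fun i _ => step i,
    Fin.sum_univ_eq_sum_range (fun t => (G₁ (t + 1) - G₁ t) - (G₂ (t + 1) - G₂ t)),
    sum_sub_distrib, sum_range_sub, sum_range_sub]
  have hlast : G₁ n ≤ G₂ n := by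
    rw [hG₁, hG₂]
    exact entropy_le_of_determined p hp fun ω ω' h => by simp_all
  have hfirst : G₂ 0 ≤ entropy p K + G₁ 0 := by
    rw [hG₁, hG₂]
    exact entropy_pair_le_add p hp hmass K _
  linarith

theorem sum_prod_causal_kernel_eq_one {W : Type} [Fintype W] :
    ∀ {n : ℕ} [Nonempty (Fin n → W)] (κ : Fin n → (Fin n → W) → W → ℝ),
      (∀ i s, ∑ w, κ i s w = 1) →
      (∀ i s s', (∀ m, m < i → s m = s' m) → κ i s = κ i s') →
      ∑ s : Fin n → W, ∏ i, κ i s (s i) = 1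
  | 0, _, _, _, _ => by simp
  | n + 1, hW, κ, hsum, hcausal => by
    obtain ⟨s₀⟩ := hW
    have : Nonempty (Fin n → W) := ⟨fun _ => s₀ 0⟩
    have htail : ∀ w, ∑ s : Fin n → W, ∏ i, κ i.succ (Fin.cons w s) (s i) = 1 := fun w =>
      sum_prod_causal_kernel_eq_one (fun i s => κ i.succ (Fin.cons w s)) (fun _ _ => hsum _ _)
        fun i s s' h => hcausal _ _ _ fun m hm => by
          induction m using Fin.cases with
          | zero => rfl
          | succ m => exact h m (Fin.succ_lt_succ_iff.1 hm)
    rw [← (Fin.consEquiv fun _ => W).sum_comp, Fintype.sum_prod_type]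
    -- `κ 0` sees no coordinate, so it may be evaluated at `s₀` and summed out last
    simp only [Fin.consEquiv, Equiv.coe_fn_mk, Fin.prod_univ_succ, Fin.cons_zero, Fin.cons_succ,
      hcausal 0 (Fin.cons _ _) s₀ fun m hm => absurd hm (Fin.not_lt_zero m), ← mul_sum, htail,
      mul_one, hsum]

section Scheme

variable {X Y Z : Type} [Fintype X] [Fintype Y] [Fintype Z] {R0 R : ℝ} {n : ℕ}
  (S : Scheme X Y Z R0 R n) (A : Adversary X Y Z R n)

lemma jointPMF_nonneg {p0 : X → ℝ} (hp0 : ∀ x, 0 ≤ p0 x) (ω : Outc X Y Z R0 R n) :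
    0 ≤ jointPMF p0 S A ω := by
  refine mul_nonneg (mul_nonneg (mul_nonneg (prod_nonneg fun i _ => hp0 _) (by positivity))
    ((S.enc_pmf _ _).1 _)) (prod_nonneg fun i _ => ?_)
  exact mul_nonneg ((S.dec_pmf ..).1 _) ((A.adv_pmf ..).1 _)

lemma sum_prod_dec_mul_adv_eq_one [Nonempty (Fin n → Y × Z)] (j : Fin (msgCard R n))
    (k : Fin (keyCard R0 n)) (x : Fin n → X) :
    ∑ y : Fin n → Y, ∑ z : Fin n → Z,
      ∏ i, S.dec i j k x y z (y i) * A.adv i j x y z (z i) = 1 := by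
  rw [← Fintype.sum_prod_type', ← (Equiv.arrowProdEquivProdArrow _ _ _).sum_comp]
  refine sum_prod_causal_kernel_eq_one (fun i (s : Fin n → Y × Z) (w : Y × Z) =>
      S.dec i j k x (fun m => (s m).1) (fun m => (s m).2) w.1 *
        A.adv i j x (fun m => (s m).1) (fun m => (s m).2) w.2)
    (fun i s => ?_) fun i s s' h => ?_
  · rw [Fintype.sum_prod_type, ← sum_mul_sum, (S.dec_pmf ..).2, (A.adv_pmf ..).2, one_mul]
  · have hy : ∀ m, m < i → (s m).1 = (s' m).1 := fun m hm => by rw [h m hm]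
    have hz : ∀ m, m < i → (s m).2 = (s' m).2 := fun m hm => by rw [h m hm]
    rw [S.dec_causal i j k x _ _ x _ _ (fun _ _ => rfl) hy hz,
      A.adv_causal i j x _ _ x _ _ (fun _ _ => rfl) hy hz]

lemma probOf_jointPMF_key [Nonempty (Fin n → Y × Z)] {p0 : X → ℝ} (hp0 : ∑ x, p0 x = 1)
    (k : Fin (keyCard R0 n)) :
    probOf (jointPMF p0 S A) (fun ω => ω.2.1) k = (keyCard R0 n : ℝ)⁻¹ := by
  simp only [probOf, jointPMF, Fintype.sum_prod_type]
  simp only [sum_ite_irrel, ← mul_sum, sum_prod_dec_mul_adv_eq_one, mul_one, sum_const_zero,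
    sum_ite_eq', mem_univ, if_true, (S.enc_pmf _ _).2, ← sum_mul, ← Fintype.prod_sum, hp0,
    prod_const_one, one_mul]

end Scheme

lemma keyCard_pos (R0 : ℝ) (n : ℕ) : 0 < keyCard R0 n :=
  lt_max_of_lt_left one_pos

lemma logb_keyCard_le {R0 : ℝ} (hR0 : 0 ≤ R0) (n : ℕ) : logb 2 (keyCard R0 n) ≤ n * R0 := by
  have hcard : (keyCard R0 n : ℝ) ≤ 2 ^ (n * R0) := by
    rw [keyCard, Nat.cast_max, Nat.cast_one]
    exact max_le (one_le_rpow one_le_two (by positivity)) (Nat.floor_le (by positivity))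
  calc logb 2 (keyCard R0 n) ≤ logb 2 (2 ^ (n * R0)) :=
      logb_le_logb_of_le one_lt_two (Nat.cast_pos.2 (keyCard_pos R0 n)) hcard
    _ = n * R0 := logb_rpow two_pos (by norm_num)

lemma pastOf_eq_pastOf_iff {α : Type} {n : ℕ} (x y : Fin n → α) (i : Fin n) :
    pastOf x i = pastOf y i ↔ ∀ m : Fin n, (m : ℕ) < i → x m = y m := by
  simp only [pastOf, funext_iff]
  exact ⟨fun h m hm => h ⟨m, hm⟩, fun h m => h _ m.2⟩

theorem key_rate_converse_general
    {X Y Z : Type} [Fintype X] [Fintype Y] [Fintype Z]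
    (p0 : X → ℝ) (hp0 : IsPMF p0)
    (R0 R : ℝ) (hR0 : 0 ≤ R0) (n : ℕ)
    (S : Scheme X Y Z R0 R n) (A : Adversary X Y Z R n) :
    entropy (jointPMF p0 S A) (fun ω => ω.2.1) ≥
      ∑ i : Fin n, condMutualInfo (jointPMF p0 S A)
        (fun ω => (ω.1 i, ω.2.2.2.1 i))
        (fun ω => ω.2.1)
        (fun ω => (ω.2.2.1, pastOf ω.1 i, pastOf ω.2.2.2.1 i, pastOf ω.2.2.2.2 i)) ∧
    (n : ℝ) * R0 ≥
      ∑ i : Fin n, condMutualInfo (jointPMF p0 S A)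
        (fun ω => (ω.1 i, ω.2.2.2.1 i))
        (fun ω => ω.2.1)
        (fun ω => (ω.2.2.1, pastOf ω.1 i, pastOf ω.2.2.2.1 i, pastOf ω.2.2.2.2 i)) := by
  set p := jointPMF p0 S A
  have hp : ∀ ω, 0 ≤ p ω := jointPMF_nonneg S A hp0.1
  rcases isEmpty_or_nonempty (Outc X Y Z R0 R n) with hΩ | hΩ
  · simpa [condMutualInfo, entropy_of_isEmpty] using mul_nonneg n.cast_nonneg hR0
  obtain ⟨ω₀⟩ := hΩ
  have : Nonempty (Fin n → Y × Z) := ⟨fun i => (ω₀.2.2.2.1 i, ω₀.2.2.2.2 i)⟩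
  have hkey : ∀ k, probOf p (fun ω => ω.2.1) k = (keyCard R0 n : ℝ)⁻¹ :=
    probOf_jointPMF_key S A hp0.2
  have hmass : ∑ ω, p ω = 1 := by
    rw [← sum_probOf p fun ω => ω.2.1]
    simp [hkey, (keyCard_pos R0 n).ne']
  have hH : entropy p (fun ω => ω.2.1) = logb 2 (keyCard R0 n) := by
    simpa using entropy_of_probOf_eq_inv_card p (A := fun ω => ω.2.1) (by simpa using hkey)
  suffices hconverse : _ ≤ entropy p (fun ω => ω.2.1) from
    ⟨hconverse, hconverse.trans (hH ▸ logb_keyCard_le hR0 n)⟩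
  refine (sum_le_sum fun i _ => ?_).trans (sum_condMutualInfo_past_le_entropy p hp hmass
    (fun i ω => ((ω.1 i, ω.2.2.2.1 i), ω.2.2.2.2 i)) (fun ω => ω.2.1) fun ω => ω.2.2.1)
  refine (condMutualInfo_congr_cond p _ _ fun ω ω' => ?_).trans_le
    (condMutualInfo_le_pair_left p hp _ _ _ _)
  simp only [Prod.mk.injEq, pastOf_eq_pastOf_iff]
  simp only [funext_iff, Subtype.forall, Prod.mk.injEq, forall_and, and_assoc]

/-- **Key-rate converse inequality.**  For any scheme and any adversary strategy,
`H(K) ≥ Σᵢ I(Xᵢ, Yᵢ ; K | J, X^{i-1}, Y^{i-1}, Z^{i-1})`, and consequently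
`n R₀ ≥ Σᵢ I(Xᵢ, Yᵢ ; K | J, X^{i-1}, Y^{i-1}, Z^{i-1})`. -/
theorem key_rate_converse
    {X Y Z : Type} [Fintype X] [Fintype Y] [Fintype Z]
    (p0 : X → ℝ) (hp0 : IsPMF p0)
    (R0 R : ℝ) (hR0 : 0 ≤ R0) (hR : 0 ≤ R) (n : ℕ)
    (S : Scheme X Y Z R0 R n) (A : Adversary X Y Z R n) :
    entropy (jointPMF p0 S A) (fun ω => ω.2.1) ≥
      ∑ i : Fin n, condMutualInfo (jointPMF p0 S A)
        (fun ω => (ω.1 i, ω.2.2.2.1 i))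
        (fun ω => ω.2.1)
        (fun ω => (ω.2.2.1, pastOf ω.1 i, pastOf ω.2.2.2.1 i, pastOf ω.2.2.2.2 i)) ∧
    (n : ℝ) * R0 ≥
      ∑ i : Fin n, condMutualInfo (jointPMF p0 S A)
        (fun ω => (ω.1 i, ω.2.2.2.1 i))
        (fun ω => ω.2.1)
        (fun ω => (ω.2.2.1, pastOf ω.1 i, pastOf ω.2.2.2.1 i, pastOf ω.2.2.2.2 i)) :=
  key_rate_converse_general p0 hp0 R0 R hR0 n S A

end
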